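/- Let (E, ρ) be a q-polymatroid and ρ* the dual rank function with respect to a non-degenerate symmetric bilinear form. Then the bidual satisfies ρ** = ρ, i.e., (ρ*)*(V) = ρ(V) for all subspaces V of E. -/

import Mathlib

/-!
Because `(V^⊥)^⊥ = V` and `dim V + dim V^⊥ = dim E`, expanding `ρ**(V)` makes the dimension
terms and the `ρ(E)` terms cancel, leaving `ρ(V) - ρ(0)`; and `ρ(0) = 0` since `0 ≤ ρ(0) ≤ dim 0`.
-/

open Module

section DualRank

variable {K V : Type*} [Field K] [AddCommGroup V] [Module K V] [FiniteDimensional K V]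

noncomputable def dualRank (B : LinearMap.BilinForm K V) (ρ : Submodule K V → ℚ)
    (W : Submodule K V) : ℚ :=
  finrank K W + ρ (B.orthogonal W) - ρ ⊤

theorem dualRank_dualRank {B : LinearMap.BilinForm K V} (hB : B.Nondegenerate) (hB₀ : B.IsRefl)
    (ρ : Submodule K V → ℚ) (W : Submodule K V) :
    dualRank B (dualRank B ρ) W = ρ W - ρ ⊥ := by
  have hdim : (finrank K W : ℚ) + finrank K (B.orthogonal W) = finrank K V := by
    rw [B.finrank_orthogonal hB, Nat.cast_sub (Submodule.finrank_le W)]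
    ring
  simp only [dualRank, B.orthogonal_orthogonal hB hB₀, B.orthogonal_top_eq_bot hB, finrank_top]
  linarith

end DualRank

theorem qpm_bidual_eq_general
    {𝔽 E : Type*} [Field 𝔽] [AddCommGroup E] [Module 𝔽 E]
    [FiniteDimensional 𝔽 E] (ρ : Submodule 𝔽 E → ℚ)
    (hR1 : ∀ V : Submodule 𝔽 E, 0 ≤ ρ V ∧ ρ V ≤ (finrank 𝔽 V : ℚ))
    (B : LinearMap.BilinForm 𝔽 E) (hsymm : B.IsSymm) (hnd : B.Nondegenerate)
    (ρs ρss : Submodule 𝔽 E → ℚ)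
    (hρs : ∀ V : Submodule 𝔽 E,
      ρs V = (finrank 𝔽 V : ℚ) + ρ (B.orthogonal V) - ρ (⊤ : Submodule 𝔽 E))
    (hρss : ∀ V : Submodule 𝔽 E,
      ρss V = (finrank 𝔽 V : ℚ) + ρs (B.orthogonal V) - ρs (⊤ : Submodule 𝔽 E)) :
    ∀ V : Submodule 𝔽 E, ρss V = ρ V := by
  intro V
  have hρs_eq : ρs = dualRank B ρ := funext hρs
  have hρss_eq : ρss = dualRank B ρs := funext hρss
  have hρ_bot : ρ ⊥ = 0 := by
    have := hR1 ⊥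
    simp only [finrank_bot, Nat.cast_zero] at this
    exact le_antisymm this.2 this.1
  rw [hρss_eq, hρs_eq, dualRank_dualRank hnd hsymm.isRefl, hρ_bot, sub_zero]

theorem qpm_bidual_eq
    {𝔽 E : Type*} [Field 𝔽] [Fintype 𝔽] [AddCommGroup E] [Module 𝔽 E]
    [FiniteDimensional 𝔽 E] (ρ : Submodule 𝔽 E → ℚ)
    (hR1 : ∀ V : Submodule 𝔽 E, 0 ≤ ρ V ∧ ρ V ≤ (finrank 𝔽 V : ℚ))
    (hR2 : ∀ V W : Submodule 𝔽 E, V ≤ W → ρ V ≤ ρ W)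
    (hR3 : ∀ V W : Submodule 𝔽 E, ρ (V ⊔ W) + ρ (V ⊓ W) ≤ ρ V + ρ W)
    (B : LinearMap.BilinForm 𝔽 E) (hsymm : B.IsSymm) (hnd : B.Nondegenerate)
    (ρs ρss : Submodule 𝔽 E → ℚ)
    (hρs : ∀ V : Submodule 𝔽 E,
      ρs V = (finrank 𝔽 V : ℚ) + ρ (B.orthogonal V) - ρ (⊤ : Submodule 𝔽 E))
    (hρss : ∀ V : Submodule 𝔽 E,
      ρss V = (finrank 𝔽 V : ℚ) + ρs (B.orthogonal V) - ρs (⊤ : Submodule 𝔽 E)) :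
    ∀ V : Submodule 𝔽 E, ρss V = ρ V :=
  qpm_bidual_eq_general ρ hR1 B hsymm hnd ρs ρss hρs hρss
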